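/- arXiv:2304.02068 — 12 statements merged into one kernel-verified Lean document; each statement's English description precedes it below -/
import Mathlib

section
/- Let g(x; φ, X) denote the equilibrium payoff of the adversary on one front when it allocates x ≥ 0 against a player with budget X > 0 defending total battlefield value φ > 0, namely g(x; φ, X) = φ·x/(2X) if x < X and g(x; φ, X) = φ·(1 − X/(2x)) if x ≥ X. Suppose φ1, φ2, X1, X2 are positive reals with φ1·X2 > φ2·X1 and 0 < 1 − √(φ1·X1·X2/φ2) ≤ X2. Then the point x* = √(φ1·X1·X2/φ2) lies in [0,1] and maximizes the adversary's total payoff f(x) = g(x; φ1, X1) + g(1 − x; φ2, X2) over all x ∈ [0,1]; that is, f(x) ≤ f(x*) for every x ∈ [0,1]. -/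
/-- Equilibrium payoff of the adversary on one front when it allocates `x`
against a player with budget `X` defending total battlefield value `φ`. -/
noncomputable def advPayoff (x φ X : ℝ) : ℝ :=
  if x < X then φ * x / (2 * X) else φ * (1 - X / (2 * x))

/-!
On each front `y ↦ advPayoff y φ X` is concave (the branch `φ (1 - X / (2y))` is tangent to the
linear piece at `y = X`), so it lies below its tangent line at any `s ≥ X`. At
`x* = √(φ1 X1 X2 / φ2)` the adversary is on the concave branch of front 1 (`X1 < x*` because
`φ1 X2 > φ2 X1`) and on the linear branch of front 2 (`1 - x* ≤ X2`), and the choice of `x*` makes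
the two marginal payoffs equal: `φ1 X1 / (2 x*²) = φ2 / (2 X2)`. Summing the two tangent-line
bounds, the terms in `x` cancel and what remains is the payoff at `x*`.
-/

lemma advPayoff_of_le {y φ X : ℝ} (hX : 0 < X) (hyX : y ≤ X) :
    advPayoff y φ X = φ * y / (2 * X) := by
  unfold advPayoff
  rcases hyX.lt_or_eq with hlt | rfl
  · rw [if_pos hlt]
  · rw [if_neg (lt_irrefl y)]
    field_simp
    ring

lemma advPayoff_le_tangent {s φ X : ℝ} (hX : 0 < X) (hXs : X ≤ s) (hφ : 0 ≤ φ) (y : ℝ) :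
    advPayoff y φ X ≤ advPayoff s φ X + φ * X / (2 * s ^ 2) * (y - s) := by
  have hs : 0 < s := hX.trans_le hXs
  rw [advPayoff, advPayoff, if_neg hXs.not_gt, ← sub_nonneg]
  split_ifs with hyX
  · have key : φ * (1 - X / (2 * s)) + φ * X / (2 * s ^ 2) * (y - s) - φ * y / (2 * X) =
        φ * (s - X) ^ 2 / (2 * s ^ 2) + φ * (X - y) * (s ^ 2 - X ^ 2) / (2 * s ^ 2 * X) := by
      field_simp
      ring
    have hXy : 0 ≤ X - y := sub_nonneg.2 hyX.le
    have hsX : 0 ≤ s ^ 2 - X ^ 2 := by nlinarith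
    rw [key]
    exact add_nonneg (by positivity)
      (div_nonneg (mul_nonneg (mul_nonneg hφ hXy) hsX) (by positivity))
  · have hy : 0 < y := hX.trans_le (not_lt.1 hyX)
    have key : φ * (1 - X / (2 * s)) + φ * X / (2 * s ^ 2) * (y - s) - φ * (1 - X / (2 * y)) =
        φ * X * (y - s) ^ 2 / (2 * s ^ 2 * y) := by
      field_simp
      ring
    rw [key]
    positivity

lemma advPayoff_le_linear {φ X : ℝ} (hX : 0 < X) (hφ : 0 ≤ φ) (y : ℝ) :
    advPayoff y φ X ≤ φ * y / (2 * X) := by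
  calc advPayoff y φ X ≤ advPayoff X φ X + φ * X / (2 * X ^ 2) * (y - X) :=
        advPayoff_le_tangent hX le_rfl hφ y
    _ = φ * y / (2 * X) := by
        rw [advPayoff_of_le hX le_rfl]
        field_simp
        ring

theorem case2_adversary_opt (φ1 φ2 X1 X2 : ℝ)
    (hφ1 : 0 < φ1) (hφ2 : 0 < φ2) (hX1 : 0 < X1) (hX2 : 0 < X2)
    (hratio : φ1 * X2 > φ2 * X1)
    (hlo : 0 < 1 - Real.sqrt (φ1 * X1 * X2 / φ2))
    (hhi : 1 - Real.sqrt (φ1 * X1 * X2 / φ2) ≤ X2) :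
    Real.sqrt (φ1 * X1 * X2 / φ2) ∈ Set.Icc (0 : ℝ) 1 ∧
    ∀ x ∈ Set.Icc (0 : ℝ) 1,
      advPayoff x φ1 X1 + advPayoff (1 - x) φ2 X2 ≤
      advPayoff (Real.sqrt (φ1 * X1 * X2 / φ2)) φ1 X1 +
        advPayoff (1 - Real.sqrt (φ1 * X1 * X2 / φ2)) φ2 X2 := by
  set s := Real.sqrt (φ1 * X1 * X2 / φ2)
  have hs_sq : s ^ 2 = φ1 * X1 * X2 / φ2 := Real.sq_sqrt (by positivity)
  have hX1s : X1 < s := by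
    rw [Real.lt_sqrt hX1.le, lt_div_iff₀ hφ2]
    nlinarith
  have hslope : φ1 * X1 / (2 * s ^ 2) = φ2 / (2 * X2) := by
    rw [hs_sq]
    field_simp
  refine ⟨⟨Real.sqrt_nonneg _, by linarith⟩, fun x _ => ?_⟩
  calc advPayoff x φ1 X1 + advPayoff (1 - x) φ2 X2
      ≤ (advPayoff s φ1 X1 + φ1 * X1 / (2 * s ^ 2) * (x - s)) + φ2 * (1 - x) / (2 * X2) :=
        add_le_add (advPayoff_le_tangent hX1 hX1s.le hφ1.le x)
          (advPayoff_le_linear hX2 hφ2.le (1 - x))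
    _ = advPayoff s φ1 X1 + φ2 * (1 - s) / (2 * X2) := by
        rw [hslope]
        ring
    _ = advPayoff s φ1 X1 + advPayoff (1 - s) φ2 X2 := by
        rw [advPayoff_of_le hX2 hhi]
end

section
/- Let φ1, φ2, X1, X2 be positive reals with φ1·X2 > φ2·X1 and 0 < 1 − √(φ1·X1·X2/φ2) < X2 (the interior of Case 2). Define, for τ ∈ (−φ2, φ1), π1(τ) = (1/2)·√(X1·(φ1 − τ)·(φ2 + τ)/X2) and π2(τ) = (φ2 + τ)·(1 − 1/(2·X2)) + (1/2)·√(X1·(φ1 − τ)·(φ2 + τ)/X2). Then there exists ε > 0 such that π1(τ) > π1(0) and π2(τ) > π2(0) for all τ ∈ (0, ε) if and only if φ2 < φ1 and (2 − 4·X2)·√(φ1·φ2) < (φ1 − φ2)·√(X1·X2). (Proposition 2.) -/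
/-!
Write `g τ = c (φ1 - τ) (φ2 + τ)` with `c = X1 / X2`, so that
`g τ - g 0 = c τ (φ1 - φ2 - τ)`: Player 1 gains for all small `τ > 0` exactly when `φ2 < φ1`.
Rationalising the difference of square roots gives
`π2 τ - π2 0 = τ (a + c (φ1 - φ2 - τ) / (2 (√(g τ) + √(g 0))))` with `a = 1 - 1 / (2 X2)`.
The bracket is continuous at `0` with value `a + c (φ1 - φ2) / (4 √(g 0))`, and on
`(0, φ1 - φ2)` it stays below that value because `g τ ≥ g 0` there. So Player 2 gains for all
small `τ > 0` exactly when `4 a √(g 0) + c (φ1 - φ2) > 0`; multiplying by `X2` and dividing by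
`√(X1 / X2)` turns this into the stated inequality.
-/

open Filter Topology Real

theorem sqrt_sub_sqrt_eq_div {x y : ℝ} (hx : 0 ≤ x) (hy : 0 < y) :
    √x - √y = (x - y) / (√x + √y) := by
  have hsum : 0 < √x + √y := add_pos_of_nonneg_of_pos (sqrt_nonneg x) (sqrt_pos.2 hy)
  rw [eq_div_iff hsum.ne']
  ring_nf
  rw [sq_sqrt hx, sq_sqrt hy.le]

section
variable {c p q : ℝ}

theorem eventually_sqrt_lt_sqrt_iff (hc : 0 < c) (hq : 0 ≤ q) :
    (∀ᶠ τ in 𝓝[>] 0, √(c * p * q) < √(c * (p - τ) * (q + τ))) ↔ q < p := by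
  constructor
  · intro h
    by_contra! hpq
    obtain ⟨τ, hlt, hτ : 0 < τ⟩ := (h.and self_mem_nhdsWithin).exists
    refine hlt.not_ge (sqrt_le_sqrt ?_)
    nlinarith [mul_pos hc hτ]
  · intro hpq
    filter_upwards [self_mem_nhdsWithin,
      (eventually_lt_nhds (sub_pos.2 hpq)).filter_mono nhdsWithin_le_nhds]
      with τ (hτ : 0 < τ) hτd
    have hp : 0 ≤ p := hq.trans hpq.le
    exact sqrt_lt_sqrt (by positivity) (by nlinarith [mul_pos hc hτ])

theorem lt_payoff_iff_slope_pos (a : ℝ) (hc : 0 < c) (hp : 0 < p) (hq : 0 < q) {τ : ℝ}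
    (hτ : 0 < τ) (hτp : τ ≤ p) :
    q * a + 1 / 2 * √(c * p * q) < (q + τ) * a + 1 / 2 * √(c * (p - τ) * (q + τ)) ↔
      0 < a + c * (p - q - τ) / (2 * (√(c * (p - τ) * (q + τ)) + √(c * p * q))) := by
  have hdiff :
      (q + τ) * a + 1 / 2 * √(c * (p - τ) * (q + τ)) - (q * a + 1 / 2 * √(c * p * q)) =
        τ * (a + c * (p - q - τ) / (2 * (√(c * (p - τ) * (q + τ)) + √(c * p * q)))) := by
    have hg : 0 ≤ c * (p - τ) * (q + τ) :=
      mul_nonneg (mul_nonneg hc.le (sub_nonneg.2 hτp)) (by positivity)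
    calc _ = τ * a + (√(c * (p - τ) * (q + τ)) - √(c * p * q)) / 2 := by ring
      _ = _ := by rw [sqrt_sub_sqrt_eq_div hg (by positivity), div_div]; ring
  rw [← sub_pos, hdiff, mul_pos_iff_of_pos_left hτ]

theorem eventually_lt_payoff_iff (a : ℝ) (hc : 0 < c) (hq : 0 < q) (hpq : q < p) :
    (∀ᶠ τ in 𝓝[>] 0,
      q * a + 1 / 2 * √(c * p * q) < (q + τ) * a + 1 / 2 * √(c * (p - τ) * (q + τ))) ↔
      0 < 4 * a * √(c * p * q) + c * (p - q) := by
  have hp : 0 < p := hq.trans hpq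
  have hs : 0 < √(c * p * q) := by positivity
  have hslope_zero : a + c * (p - q) / (4 * √(c * p * q)) =
      (4 * a * √(c * p * q) + c * (p - q)) / (4 * √(c * p * q)) := by
    field_simp
  constructor
  · intro h
    by_contra! hK
    obtain ⟨τ, ⟨hlt, hτ : 0 < τ⟩, hτd⟩ := ((h.and self_mem_nhdsWithin).and
      ((eventually_lt_nhds (sub_pos.2 hpq)).filter_mono nhdsWithin_le_nhds)).exists
    rw [lt_payoff_iff_slope_pos a hc hp hq hτ (by linarith)] at hlt
    have hmono : √(c * p * q) ≤ √(c * (p - τ) * (q + τ)) :=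
      sqrt_le_sqrt (by nlinarith [mul_pos hc hτ])
    have hslope_le : c * (p - q - τ) / (2 * (√(c * (p - τ) * (q + τ)) + √(c * p * q))) ≤
        c * (p - q) / (4 * √(c * p * q)) :=
      div_le_div₀ (by nlinarith) (by nlinarith) (by positivity) (by linarith)
    have : (4 * a * √(c * p * q) + c * (p - q)) / (4 * √(c * p * q)) ≤ 0 :=
      div_nonpos_of_nonpos_of_nonneg hK (by positivity)
    linarith
  · intro hK
    have hcont : ContinuousAt (fun τ =>
        a + c * (p - q - τ) / (2 * (√(c * (p - τ) * (q + τ)) + √(c * p * q)))) 0 := by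
      fun_prop (disch := positivity)
    have h0 : 0 < a + c * (p - q - 0) / (2 * (√(c * (p - 0) * (q + 0)) + √(c * p * q))) := by
      simp only [sub_zero, add_zero]
      rw [show 2 * (√(c * p * q) + √(c * p * q)) = 4 * √(c * p * q) by ring, hslope_zero]
      positivity
    filter_upwards [self_mem_nhdsWithin, (eventually_lt_nhds hp).filter_mono nhdsWithin_le_nhds,
      (hcont.eventually (lt_mem_nhds h0)).filter_mono nhdsWithin_le_nhds] with τ hτ hτp hslope
    exact (lt_payoff_iff_slope_pos a hc hp hq hτ hτp.le).2 hslope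

end

theorem four_mul_sqrt_add_pos_iff {φ1 φ2 X1 X2 : ℝ} (hX1 : 0 < X1) (hX2 : 0 < X2) :
    0 < 4 * (1 - 1 / (2 * X2)) * √(X1 / X2 * φ1 * φ2) + X1 / X2 * (φ1 - φ2) ↔
      (2 - 4 * X2) * √(φ1 * φ2) < (φ1 - φ2) * √(X1 * X2) := by
  have hc : 0 < X1 / X2 := div_pos hX1 hX2
  set u := √(X1 / X2)
  have hu : 0 < u := sqrt_pos.2 hc
  have hsqrt_mul : √(X1 / X2 * φ1 * φ2) = u * √(φ1 * φ2) := by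
    rw [mul_assoc, sqrt_mul hc.le]
  have hsqrt_budget : √(X1 * X2) = u * X2 := by
    rw [show X1 * X2 = X1 / X2 * X2 ^ 2 by field_simp, sqrt_mul hc.le, sqrt_sq hX2.le]
  have hc_sq : X1 / X2 = u ^ 2 := (sq_sqrt hc.le).symm
  have key : X2 * (4 * (1 - 1 / (2 * X2)) * √(X1 / X2 * φ1 * φ2) + X1 / X2 * (φ1 - φ2)) =
      u * ((φ1 - φ2) * √(X1 * X2) - (2 - 4 * X2) * √(φ1 * φ2)) := by
    rw [hsqrt_mul, hsqrt_budget, hc_sq]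
    field_simp
    ring
  rw [← mul_pos_iff_of_pos_left hX2, key, mul_pos_iff_of_pos_left hu, sub_pos]

theorem case2_small_mutually_beneficial_iff_general (φ1 φ2 X1 X2 : ℝ)
    (hφ2 : 0 < φ2) (hX1 : 0 < X1) (hX2 : 0 < X2)
    (π1 π2 : ℝ → ℝ)
    (hπ1 : ∀ τ, π1 τ = (1 / 2) * Real.sqrt (X1 * (φ1 - τ) * (φ2 + τ) / X2))
    (hπ2 : ∀ τ, π2 τ = (φ2 + τ) * (1 - 1 / (2 * X2)) +
      (1 / 2) * Real.sqrt (X1 * (φ1 - τ) * (φ2 + τ) / X2)) :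
    (∃ ε > 0, ∀ τ ∈ Set.Ioo (0 : ℝ) ε, π1 τ > π1 0 ∧ π2 τ > π2 0) ↔
      (φ2 < φ1 ∧
        (2 - 4 * X2) * Real.sqrt (φ1 * φ2) < (φ1 - φ2) * Real.sqrt (X1 * X2)) := by
  have hc : 0 < X1 / X2 := div_pos hX1 hX2
  have hpayoff : ∀ τ, X1 * (φ1 - τ) * (φ2 + τ) / X2 = X1 / X2 * (φ1 - τ) * (φ2 + τ) :=
    fun τ => by ring
  have hπ1_lt : ∀ τ, π1 0 < π1 τ ↔
      √(X1 / X2 * φ1 * φ2) < √(X1 / X2 * (φ1 - τ) * (φ2 + τ)) := by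
    intro τ
    simp only [hπ1, hpayoff]
    simp only [sub_zero, add_zero]
    exact mul_lt_mul_iff_right₀ (by norm_num : (0 : ℝ) < 1 / 2)
  have hπ2_lt : ∀ τ, π2 0 < π2 τ ↔
      φ2 * (1 - 1 / (2 * X2)) + 1 / 2 * √(X1 / X2 * φ1 * φ2) <
        (φ2 + τ) * (1 - 1 / (2 * X2)) + 1 / 2 * √(X1 / X2 * (φ1 - τ) * (φ2 + τ)) := by
    intro τ
    simp only [hπ2, hpayoff]
    simp only [sub_zero, add_zero]
  refine (nhdsGT_basis (0 : ℝ)).eventually_iff.symm.trans ?_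
  simp only [gt_iff_lt, hπ1_lt, hπ2_lt, eventually_and, eventually_sqrt_lt_sqrt_iff hc hφ2.le]
  refine and_congr_right fun hφ => ?_
  rw [eventually_lt_payoff_iff _ hc hφ2 hφ, four_mul_sqrt_add_pos_iff hX1 hX2]

theorem case2_small_mutually_beneficial_iff (φ1 φ2 X1 X2 : ℝ)
    (hφ1 : 0 < φ1) (hφ2 : 0 < φ2) (hX1 : 0 < X1) (hX2 : 0 < X2)
    (hratio : φ1 * X2 > φ2 * X1)
    (hlo : 0 < 1 - Real.sqrt (φ1 * X1 * X2 / φ2))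
    (hhi : 1 - Real.sqrt (φ1 * X1 * X2 / φ2) < X2)
    (π1 π2 : ℝ → ℝ)
    (hπ1 : ∀ τ, π1 τ = (1 / 2) * Real.sqrt (X1 * (φ1 - τ) * (φ2 + τ) / X2))
    (hπ2 : ∀ τ, π2 τ = (φ2 + τ) * (1 - 1 / (2 * X2)) +
      (1 / 2) * Real.sqrt (X1 * (φ1 - τ) * (φ2 + τ) / X2)) :
    (∃ ε > 0, ∀ τ ∈ Set.Ioo (0 : ℝ) ε, π1 τ > π1 0 ∧ π2 τ > π2 0) ↔
      (φ2 < φ1 ∧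
        (2 - 4 * X2) * Real.sqrt (φ1 * φ2) < (φ1 - φ2) * Real.sqrt (X1 * X2)) :=
  case2_small_mutually_beneficial_iff_general φ1 φ2 X1 X2 hφ2 hX1 hX2 π1 π2 hπ1 hπ2
end

section
/- Let φ1, φ2, X1, X2 be positive reals with φ1·X2 > φ2·X1 and 1 − √(φ1·X1·X2/φ2) > X2 (the interior of Case 3). Define, for τ ∈ (−φ2, φ1), π1(τ) = ((φ1 − τ)/2)·X1 + (1/2)·√(X1·X2·(φ1 − τ)·(φ2 + τ)) and π2(τ) = ((φ2 + τ)/2)·X2 + (1/2)·√(X1·X2·(φ1 − τ)·(φ2 + τ)). Then there exists ε > 0 such that π1(τ) > π1(0) and π2(τ) > π2(0) for all τ ∈ (0, ε) if and only if φ2 < φ1 and X2·(φ1 − φ2)² > 4·X1·φ1·φ2. (Proposition 3.) -/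
set_option maxHeartbeats 1600000 in
theorem case3_small_mutually_beneficial_iff (φ1 φ2 X1 X2 : ℝ)
    (hφ1 : 0 < φ1) (hφ2 : 0 < φ2) (hX1 : 0 < X1) (hX2 : 0 < X2)
    (hratio : φ1 * X2 > φ2 * X1)
    (hcase : 1 - Real.sqrt (φ1 * X1 * X2 / φ2) > X2)
    (π1 π2 : ℝ → ℝ)
    (hπ1 : ∀ τ, π1 τ = ((φ1 - τ) / 2) * X1 +
      (1 / 2) * Real.sqrt (X1 * X2 * (φ1 - τ) * (φ2 + τ)))
    (hπ2 : ∀ τ, π2 τ = ((φ2 + τ) / 2) * X2 +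
      (1 / 2) * Real.sqrt (X1 * X2 * (φ1 - τ) * (φ2 + τ))) :
    (∃ ε > 0, ∀ τ ∈ Set.Ioo (0 : ℝ) ε, π1 τ > π1 0 ∧ π2 τ > π2 0) ↔
      (φ2 < φ1 ∧ X2 * (φ1 - φ2) ^ 2 > 4 * X1 * φ1 * φ2) := by
  have hg0pos : (0:ℝ) < X1 * X2 * (φ1 - 0) * (φ2 + 0) := by
    apply mul_pos (mul_pos (mul_pos hX1 hX2) (by linarith)) (by linarith)
  set b := Real.sqrt (X1 * X2 * (φ1 - 0) * (φ2 + 0)) with hb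
  have hbsq : b ^ 2 = X1 * X2 * φ1 * φ2 := by
    rw [hb, Real.sq_sqrt hg0pos.le]; ring
  have hbpos : 0 < b := by rw [hb]; exact Real.sqrt_pos.mpr hg0pos
  constructor
  · rintro ⟨ε, hε, hall⟩
    set τ := min (ε / 2) (φ1 / 2) with hτdef
    have hτpos : 0 < τ := lt_min (by linarith) (by linarith)
    have hτlt : τ < ε := lt_of_le_of_lt (min_le_left _ _) (by linarith)
    have hτφ : τ ≤ φ1 / 2 := min_le_right _ _
    obtain ⟨h1, _⟩ := hall τ ⟨hτpos, hτlt⟩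
    rw [hπ1 τ, hπ1 0, ← hb] at h1
    set a := Real.sqrt (X1 * X2 * (φ1 - τ) * (φ2 + τ)) with ha
    have hgτpos : 0 < X1 * X2 * (φ1 - τ) * (φ2 + τ) := by
      apply mul_pos (mul_pos (mul_pos hX1 hX2) (by linarith)) (by linarith)
    have hanneg : 0 ≤ a := Real.sqrt_nonneg _
    have hasq : a ^ 2 = X1 * X2 * (φ1 - τ) * (φ2 + τ) := by
      rw [ha, Real.sq_sqrt hgτpos.le]
    have hab : a - b > X1 * τ := by linarith
    have hX1τ : 0 < X1 * τ := mul_pos hX1 hτpos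
    have hagtb : a > b := by linarith
    have hsum : 0 < a + b := by linarith
    have heq : (a - b) * (a + b) = X1 * X2 * τ * (φ1 - φ2 - τ) := by
      rw [show (a - b) * (a + b) = a ^ 2 - b ^ 2 by ring, hasq, hbsq]; ring
    have h2 : X1 * τ * (a + b) < X1 * X2 * τ * (φ1 - φ2 - τ) := by
      rw [← heq]; exact mul_lt_mul_of_pos_right hab hsum
    have h4 : X1 * τ * (2 * b) ≤ X1 * τ * (a + b) :=
      mul_le_mul_of_nonneg_left (by linarith) hX1τ.le
    have key : X2 * (φ1 - φ2 - τ) > 2 * b := by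
      have h5 : X1 * τ * (2 * b) < X1 * τ * (X2 * (φ1 - φ2 - τ)) := by
        calc X1 * τ * (2 * b) ≤ X1 * τ * (a + b) := h4
        _ < X1 * X2 * τ * (φ1 - φ2 - τ) := h2
        _ = X1 * τ * (X2 * (φ1 - φ2 - τ)) := by ring
      exact (mul_lt_mul_iff_right₀ hX1τ).mp h5
    have hX2τ : 0 < X2 * τ := mul_pos hX2 hτpos
    have hφlt : φ2 < φ1 := by nlinarith [key, hbpos, hX2τ]
    refine ⟨hφlt, ?_⟩
    have k2 : X2 * (φ1 - φ2) > 2 * b := by nlinarith [key, hX2τ]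
    have hsq : (2 * b) * (2 * b) < (X2 * (φ1 - φ2)) * (X2 * (φ1 - φ2)) :=
      mul_self_lt_mul_self (by linarith) k2
    have hb4 : (2 * b) * (2 * b) = X2 * (4 * X1 * φ1 * φ2) := by
      rw [show (2 * b) * (2 * b) = 4 * b ^ 2 by ring, hbsq]; ring
    have hc : X2 * (4 * X1 * φ1 * φ2) < X2 * (X2 * (φ1 - φ2) ^ 2) := by
      clear_value τ a b
      clear hall hπ1 hπ2 hcase h1 ha hb hτdef hasq hbsq heq h2 h4 key k2
      nlinarith [hsq, hb4]
    exact (mul_lt_mul_iff_right₀ hX2).mp hc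
  · rintro ⟨hφlt, hkey⟩
    have hb2 : X2 * (φ1 - φ2) > 2 * b := by
      have h1 : (X2 * (φ1 - φ2)) ^ 2 > (2 * b) ^ 2 := by nlinarith [hkey, hX2]
      nlinarith [h1, hbpos, mul_pos hX2 (sub_pos.mpr hφlt)]
    set h : ℝ → ℝ := fun τ =>
      X2 * (φ1 - φ2 - τ) - Real.sqrt (X1 * X2 * (φ1 - τ) * (φ2 + τ)) - b with hhdef
    have hcont : ContinuousAt h 0 := by
      apply ContinuousAt.sub
      apply ContinuousAt.sub
      · fun_prop
      · exact Real.continuous_sqrt.continuousAt.comp (by fun_prop)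
      · fun_prop
    have hh0 : 0 < h 0 := by
      simp only [hhdef]
      rw [← hb]
      linarith
    have hmem : h ⁻¹' Set.Ioi 0 ∈ nhds (0:ℝ) := hcont (Ioi_mem_nhds hh0)
    obtain ⟨δ, hδpos, hδ⟩ := Metric.mem_nhds_iff.mp hmem
    refine ⟨min δ φ1, lt_min hδpos hφ1, ?_⟩
    rintro τ ⟨hτ0, hτε⟩
    have hτδ : τ < δ := lt_of_lt_of_le hτε (min_le_left _ _)
    have hτφ : τ < φ1 := lt_of_lt_of_le hτε (min_le_right _ _)
    have hball : τ ∈ Metric.ball (0:ℝ) δ := by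
      simp [Real.dist_eq, abs_of_pos hτ0, hτδ]
    have hhτ : (0:ℝ) < h τ := hδ hball
    simp only [hhdef] at hhτ
    set a := Real.sqrt (X1 * X2 * (φ1 - τ) * (φ2 + τ)) with ha
    have hgτpos : 0 < X1 * X2 * (φ1 - τ) * (φ2 + τ) := by
      apply mul_pos (mul_pos (mul_pos hX1 hX2) (by linarith)) (by linarith)
    have hanneg : 0 ≤ a := Real.sqrt_nonneg _
    have hasq : a ^ 2 = X1 * X2 * (φ1 - τ) * (φ2 + τ) := by
      rw [ha, Real.sq_sqrt hgτpos.le]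
    have hsum : 0 < a + b := by linarith
    have hX1τ : 0 < X1 * τ := mul_pos hX1 hτ0
    have heq : (a - b) * (a + b) = X1 * X2 * τ * (φ1 - φ2 - τ) := by
      rw [show (a - b) * (a + b) = a ^ 2 - b ^ 2 by ring, hasq, hbsq]; ring
    have h2 : X1 * τ * (a + b) < (a - b) * (a + b) := by
      rw [heq]
      calc X1 * τ * (a + b) < X1 * τ * (X2 * (φ1 - φ2 - τ)) :=
            (mul_lt_mul_iff_right₀ hX1τ).mpr (by linarith)
        _ = X1 * X2 * τ * (φ1 - φ2 - τ) := by ring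
    have hab : X1 * τ < a - b := lt_of_mul_lt_mul_right h2 hsum.le
    constructor
    · rw [hπ1 τ, hπ1 0, ← hb, ← ha]; linarith
    · rw [hπ2 τ, hπ2 0, ← hb, ← ha]
      have hX2τ : 0 < X2 * τ := mul_pos hX2 hτ0
      linarith
end

section
/- Let φ1, φ2, X1, X2 be positive reals with X1 ≥ 1, X2 ≥ 1, and φ1·X2 > φ2·X1. Then there exists a real number τ such that φ1 − τ > φ1·(1 − 1/(2·X1)), (φ2 + τ)·(1 − 1/(2·X2)) > φ2, and (φ2 + τ)·X1 > (φ1 − τ)·X2, if and only if (2·X1·X2 − X1 − X2)·φ1 < 2·X1²·φ2 and 2·X1·φ2 < (2·X2 − 1)·φ1. (Theorem 1 in the regime X1 ≥ 1, X2 ≥ 1 / Proposition 4: Case 1a to Case 1b transfers.) -/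
theorem case1a_to_1b_region1 (φ1 φ2 X1 X2 : ℝ)
    (hφ1 : 0 < φ1) (hφ2 : 0 < φ2) (hX1 : 1 ≤ X1) (hX2 : 1 ≤ X2)
    (hratio : φ1 * X2 > φ2 * X1) :
    (∃ τ : ℝ,
        φ1 - τ > φ1 * (1 - 1 / (2 * X1)) ∧
        (φ2 + τ) * (1 - 1 / (2 * X2)) > φ2 ∧
        (φ2 + τ) * X1 > (φ1 - τ) * X2) ↔
      ((2 * X1 * X2 - X1 - X2) * φ1 < 2 * X1 ^ 2 * φ2 ∧
        2 * X1 * φ2 < (2 * X2 - 1) * φ1) := by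
  have hX1' : (0:ℝ) < X1 := lt_of_lt_of_le one_pos hX1
  have hX2' : (0:ℝ) < X2 := lt_of_lt_of_le one_pos hX2
  have hd1 : (0:ℝ) < 2 * X1 := by linarith
  have hd2 : (0:ℝ) < 2 * X2 - 1 := by linarith
  have hd3 : (0:ℝ) < X1 + X2 := by linarith
  have h2X2 : (0:ℝ) < 2 * X2 := by linarith
  have e1 : ∀ τ : ℝ, φ1 * (1 - 1 / (2 * X1)) = φ1 - φ1 / (2 * X1) := by
    intro τ; ring
  constructor
  · rintro ⟨τ, h1, h2, h3⟩
    -- extract multiplied-out bounds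
    have hub : τ * (2 * X1) < φ1 := by
      rw [e1 τ] at h1
      have hτ : τ < φ1 / (2 * X1) := by linarith
      calc τ * (2 * X1) < (φ1 / (2 * X1)) * (2 * X1) := by
            exact mul_lt_mul_of_pos_right hτ hd1
        _ = φ1 := by field_simp
    have hlb1 : φ2 < τ * (2 * X2 - 1) := by
      have key : (φ2 + τ) * (1 - 1 / (2 * X2)) = ((φ2 + τ) * (2 * X2 - 1)) / (2 * X2) := by
        field_simp
      rw [key] at h2
      have := (lt_div_iff₀ h2X2).mp h2
      nlinarith
    have hlb2 : φ1 * X2 - φ2 * X1 < τ * (X1 + X2) := by nlinarith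
    constructor
    · nlinarith [mul_pos hd3 hd1]
    · nlinarith
  · rintro ⟨c1, c2⟩
    set ub := φ1 / (2 * X1) with hub_def
    set a := φ2 / (2 * X2 - 1) with ha_def
    set b := (φ1 * X2 - φ2 * X1) / (X1 + X2) with hb_def
    have hac : a < ub := by
      rw [ha_def, hub_def, div_lt_div_iff₀ hd2 hd1]
      nlinarith
    have hbc : b < ub := by
      rw [hb_def, hub_def, div_lt_div_iff₀ hd3 hd1]
      nlinarith
    have hm : max a b < ub := max_lt hac hbc
    refine ⟨(max a b + ub) / 2, ?_, ?_, ?_⟩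
    · have hτ : (max a b + ub) / 2 < ub := by linarith
      rw [e1 ((max a b + ub) / 2)]
      have : (max a b + ub) / 2 < φ1 / (2 * X1) := hτ
      linarith
    · have hτ : a < (max a b + ub) / 2 := by
        have := le_max_left a b; linarith
      have key : φ2 < ((max a b + ub) / 2) * (2 * X2 - 1) := by
        calc φ2 = a * (2 * X2 - 1) := by rw [ha_def]; field_simp
          _ < ((max a b + ub) / 2) * (2 * X2 - 1) :=
              mul_lt_mul_of_pos_right hτ hd2
      have key2 : (φ2 + (max a b + ub) / 2) * (1 - 1 / (2 * X2))
          = ((φ2 + (max a b + ub) / 2) * (2 * X2 - 1)) / (2 * X2) := by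
        field_simp
      rw [key2, gt_iff_lt, lt_div_iff₀ h2X2]
      nlinarith
    · have hτ : b < (max a b + ub) / 2 := by
        have := le_max_right a b; linarith
      have key : φ1 * X2 - φ2 * X1 < ((max a b + ub) / 2) * (X1 + X2) := by
        calc φ1 * X2 - φ2 * X1 = b * (X1 + X2) := by rw [hb_def]; field_simp
          _ < ((max a b + ub) / 2) * (X1 + X2) :=
              mul_lt_mul_of_pos_right hτ hd3
      nlinarith
end

section
/- Let φ1, φ2, X1, X2 be positive reals with X1 ≥ 1, X2 < 1, φ1·X2 > φ2·X1, and φ1·X1·X2 ≥ φ2. Then there exists a real number τ such that φ1 − τ > φ1·(1 − 1/(2·X1)), (φ2 + τ)·(X2/2) > φ2, and (φ2 + τ)·X1·X2 > φ1 − τ, if and only if (2·X1 − 1 − X1·X2)·φ1 < 2·X1²·X2·φ2 and 2·X1·(2 − X2)·φ2 < X2·φ1. (Proposition 5: Case 1a to Case 1b transfers when X1 ≥ 1 and X2 < 1.) -/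
theorem case1a_to_1b_region2 (φ1 φ2 X1 X2 : ℝ)
    (hφ1 : 0 < φ1) (hφ2 : 0 < φ2) (hX1 : 1 ≤ X1) (hX2pos : 0 < X2) (hX2 : X2 < 1)
    (hratio : φ1 * X2 > φ2 * X1) (hcase : φ1 * X1 * X2 ≥ φ2) :
    (∃ τ : ℝ,
        φ1 - τ > φ1 * (1 - 1 / (2 * X1)) ∧
        (φ2 + τ) * (X2 / 2) > φ2 ∧
        (φ2 + τ) * X1 * X2 > φ1 - τ) ↔
      ((2 * X1 - 1 - X1 * X2) * φ1 < 2 * X1 ^ 2 * X2 * φ2 ∧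
        2 * X1 * (2 - X2) * φ2 < X2 * φ1) := by
  have hX1' : (0:ℝ) < X1 := lt_of_lt_of_le one_pos hX1
  have h2X1 : (0:ℝ) < 2 * X1 := by linarith
  have hden : (0:ℝ) < 1 + X1 * X2 := by positivity
  constructor
  · rintro ⟨τ, h1, h2, h3⟩
    have h1' : τ * (2 * X1) < φ1 := by
      have hlt : τ < φ1 / (2 * X1) := by
        have hrw : φ1 * (1 - 1 / (2 * X1)) = φ1 - φ1 / (2 * X1) := by ring
        rw [hrw] at h1
        linarith
      exact (lt_div_iff₀ h2X1).mp hlt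
    have h2' : 2 * φ2 < (φ2 + τ) * X2 := by nlinarith
    have h3' : φ1 - φ2 * (X1 * X2) < τ * (1 + X1 * X2) := by nlinarith
    constructor
    · nlinarith [mul_lt_mul_of_pos_right h1' hden, mul_lt_mul_of_pos_left h3' h2X1]
    · nlinarith [mul_lt_mul_of_pos_left h2' h2X1, mul_lt_mul_of_pos_right h1' hX2pos]
  · rintro ⟨hA, hB⟩
    set L1 := φ2 * (2 - X2) / X2 with hL1
    set L2 := (φ1 - φ2 * (X1 * X2)) / (1 + X1 * X2) with hL2
    set U := φ1 / (2 * X1) with hU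
    have hL1U : L1 < U := by
      rw [hL1, hU, div_lt_div_iff₀ hX2pos h2X1]
      nlinarith
    have hL2U : L2 < U := by
      rw [hL2, hU, div_lt_div_iff₀ hden h2X1]
      nlinarith
    have hmax : max L1 L2 < U := max_lt hL1U hL2U
    set τ := (max L1 L2 + U) / 2 with hτ
    have hτU : τ < U := by rw [hτ]; linarith
    have hτ1 : L1 < τ := by
      have := le_max_left L1 L2
      rw [hτ]; linarith
    have hτ2 : L2 < τ := by
      have := le_max_right L1 L2
      rw [hτ]; linarith
    refine ⟨τ, ?_, ?_, ?_⟩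
    · have hrw : φ1 * (1 - 1 / (2 * X1)) = φ1 - U := by rw [hU]; ring
      rw [hrw]; linarith
    · have h := (div_lt_iff₀ hX2pos).mp hτ1
      nlinarith
    · have h := (div_lt_iff₀ hden).mp hτ2
      nlinarith
end

section
/- Let φ1, φ2, X1, X2 be positive reals with X1 < 1, X2 ≥ 1, φ1·X2 > φ2·X1, and φ1·X1·X2 ≥ φ2. Then there exists a real number τ such that φ1 − τ > φ1·(X1/2), (φ2 + τ)·(1 − 1/(2·X2)) > φ2, and (φ2 + τ)·X1 > (φ1 − τ)·X2, if and only if (X1 + X2 − 2)·φ1 < 2·φ2 and 2·φ2 < (2 − X1)·(2·X2 − 1)·φ1. (Proposition 8: Case 1a to Case 1b transfers when X1 < 1 and X2 ≥ 1.) -/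
theorem case1a_to_1b_region3 (φ1 φ2 X1 X2 : ℝ)
    (hφ1 : 0 < φ1) (hφ2 : 0 < φ2) (hX1pos : 0 < X1) (hX1 : X1 < 1) (hX2 : 1 ≤ X2)
    (hratio : φ1 * X2 > φ2 * X1) (hcase : φ1 * X1 * X2 ≥ φ2) :
    (∃ τ : ℝ,
        φ1 - τ > φ1 * (X1 / 2) ∧
        (φ2 + τ) * (1 - 1 / (2 * X2)) > φ2 ∧
        (φ2 + τ) * X1 > (φ1 - τ) * X2) ↔
      ((X1 + X2 - 2) * φ1 < 2 * φ2 ∧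
        2 * φ2 < (2 - X1) * (2 * X2 - 1) * φ1) := by
  have hX2pos : (0:ℝ) < 2 * X2 := by linarith
  have h2X2m1 : (0:ℝ) < 2 * X2 - 1 := by linarith
  have hXsum : (0:ℝ) < X1 + X2 := by linarith
  have heq : (1 - 1 / (2 * X2)) = (2 * X2 - 1) / (2 * X2) := by
    field_simp
  constructor
  · rintro ⟨τ, h1, h2, h3⟩
    -- h2 cleared of denominators
    rw [heq, gt_iff_lt, ← mul_div_assoc, lt_div_iff₀ hX2pos] at h2
    constructor
    · -- from h1 and h3
      nlinarith [mul_lt_mul_of_pos_right h3 hXsum, mul_pos hX1pos hφ1]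
    · nlinarith [mul_lt_mul_of_pos_left h1 h2X2m1]
  · rintro ⟨hA, hB⟩
    set U : ℝ := φ1 * (2 - X1) / 2 with hU
    set L1 : ℝ := φ2 / (2 * X2 - 1) with hL1
    set L2 : ℝ := (φ1 * X2 - φ2 * X1) / (X1 + X2) with hL2
    have hL1U : L1 < U := by
      rw [hL1, hU, div_lt_div_iff₀ h2X2m1 (by norm_num : (0:ℝ) < 2)]
      nlinarith
    have hL2U : L2 < U := by
      rw [hL2, hU, div_lt_div_iff₀ hXsum (by norm_num : (0:ℝ) < 2)]
      nlinarith
    refine ⟨(max L1 L2 + U) / 2, ?_, ?_, ?_⟩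
    · have : max L1 L2 < U := max_lt hL1U hL2U
      rw [hU] at this ⊢
      nlinarith
    · have hl : L1 < (max L1 L2 + U) / 2 := by
        have := le_max_left L1 L2
        have := max_lt hL1U hL2U
        linarith
      rw [hL1, div_lt_iff₀ h2X2m1] at hl
      rw [heq, gt_iff_lt, ← mul_div_assoc, lt_div_iff₀ hX2pos]
      nlinarith
    · have hl : L2 < (max L1 L2 + U) / 2 := by
        have := le_max_right L1 L2
        have := max_lt hL1U hL2U
        linarith
      rw [hL2, div_lt_iff₀ hXsum] at hl
      nlinarith
end

section
/- Let φ1, φ2, X1, X2 be positive reals with X1 < 1, X2 < 1, X1 + X2 ≥ 1, φ1·X2 > φ2·X1, and φ1·X1·X2 ≥ φ2. Then there exists a real number τ such that φ1 − τ > φ1·(X1/2), (φ2 + τ)·(X2/2) > φ2, and (φ2 + τ)·X1·X2 > φ1 − τ, if and only if (X1·X2 − 2·X2 + 1)·φ1 < 2·X2·φ2 and 2·(2 − X2)·φ2 < X2·(2 − X1)·φ1. (Proposition 10: Case 1a to Case 1b transfers when X1 < 1, X2 < 1, X1 + X2 ≥ 1.) -/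
theorem case1a_to_1b_region4 (φ1 φ2 X1 X2 : ℝ)
    (hφ1 : 0 < φ1) (hφ2 : 0 < φ2)
    (hX1pos : 0 < X1) (hX1 : X1 < 1) (hX2pos : 0 < X2) (hX2 : X2 < 1)
    (hsum : X1 + X2 ≥ 1)
    (hratio : φ1 * X2 > φ2 * X1) (hcase : φ1 * X1 * X2 ≥ φ2) :
    (∃ τ : ℝ,
        φ1 - τ > φ1 * (X1 / 2) ∧
        (φ2 + τ) * (X2 / 2) > φ2 ∧
        (φ2 + τ) * X1 * X2 > φ1 - τ) ↔
      ((X1 * X2 - 2 * X2 + 1) * φ1 < 2 * X2 * φ2 ∧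
        2 * (2 - X2) * φ2 < X2 * (2 - X1) * φ1) := by
  have hD : (0:ℝ) < 1 + X1 * X2 := by nlinarith
  constructor
  · rintro ⟨τ, h1, h2, h3⟩
    constructor
    · nlinarith [mul_pos hX1pos hX2pos]
    · nlinarith [mul_pos hX1pos hX2pos]
  · rintro ⟨c1, c2⟩
    set L1 := φ2 * (2 - X2) / X2 with hL1def
    set L2 := (φ1 - φ2 * X1 * X2) / (1 + X1 * X2) with hL2def
    set U := φ1 * (2 - X1) / 2 with hUdef
    have hL1 : L1 < U := by
      rw [hL1def, hUdef, div_lt_div_iff₀ hX2pos (by norm_num : (0:ℝ) < 2)]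
      nlinarith
    have hL2 : L2 < U := by
      rw [hL2def, hUdef, div_lt_div_iff₀ hD (by norm_num : (0:ℝ) < 2)]
      nlinarith
    have hmax : max L1 L2 < U := max_lt hL1 hL2
    refine ⟨(max L1 L2 + U) / 2, ?_, ?_, ?_⟩
    · have hτU : (max L1 L2 + U) / 2 < U := by linarith
      rw [hUdef] at hτU
      have h2' : φ1 * (2 - X1) / 2 = (2 * φ1 - φ1 * X1) / 2 := by ring
      nlinarith [hτU]
    · have hτ1 : L1 < (max L1 L2 + U) / 2 :=
        lt_of_le_of_lt (le_max_left L1 L2) (by linarith)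
      rw [hL1def, div_lt_iff₀ hX2pos] at hτ1
      nlinarith [hτ1]
    · have hτ2 : L2 < (max L1 L2 + U) / 2 :=
        lt_of_le_of_lt (le_max_right L1 L2) (by linarith)
      rw [hL2def, div_lt_iff₀ hD] at hτ2
      nlinarith [hτ2]
end

section
/- Let φ1, φ2, X1, X2 be positive reals with X1 < 1, X2 < 1, X1 + X2 ≥ 1, φ1·X2 > φ2·X1, and 0 < 1 − √(φ1·X1·X2/φ2) ≤ X2. Then there exists a real number τ such that φ1 − τ > (1/2)·√(X1·φ1·φ2/X2), (φ2 + τ)·(X2/2) > φ2·(1 − 1/(2·X2)) + (1/2)·√(X1·φ1·φ2/X2), and (φ2 + τ)·X1·X2 > φ1 − τ, if and only if max{ (1/X2)·√(X1·φ1·φ2/X2) − ((X2 − 1)²/X2²)·φ2 , (φ1 − X1·X2·φ2)/(1 + X1·X2) } < φ1 − (1/2)·√(X1·φ1·φ2/X2). (Proposition 12: Case 2a to Case 1b transfers when X1 < 1, X2 < 1, X1 + X2 ≥ 1.) -/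
theorem case2a_to_1b_region4 (φ1 φ2 X1 X2 : ℝ)
    (hφ1 : 0 < φ1) (hφ2 : 0 < φ2)
    (hX1pos : 0 < X1) (hX1 : X1 < 1) (hX2pos : 0 < X2) (hX2 : X2 < 1)
    (hsum : X1 + X2 ≥ 1)
    (hratio : φ1 * X2 > φ2 * X1)
    (hlo : 0 < 1 - Real.sqrt (φ1 * X1 * X2 / φ2))
    (hhi : 1 - Real.sqrt (φ1 * X1 * X2 / φ2) ≤ X2) :
    (∃ τ : ℝ,
        φ1 - τ > (1 / 2) * Real.sqrt (X1 * φ1 * φ2 / X2) ∧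
        (φ2 + τ) * (X2 / 2) >
          φ2 * (1 - 1 / (2 * X2)) + (1 / 2) * Real.sqrt (X1 * φ1 * φ2 / X2) ∧
        (φ2 + τ) * X1 * X2 > φ1 - τ) ↔
      max ((1 / X2) * Real.sqrt (X1 * φ1 * φ2 / X2) - ((X2 - 1) ^ 2 / X2 ^ 2) * φ2)
          ((φ1 - X1 * X2 * φ2) / (1 + X1 * X2)) <
        φ1 - (1 / 2) * Real.sqrt (X1 * φ1 * φ2 / X2) := by
  have hX2ne : X2 ≠ 0 := ne_of_gt hX2pos
  have hden : (0:ℝ) < 1 + X1 * X2 := by positivity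
  generalize Real.sqrt (X1 * φ1 * φ2 / X2) = s
  have e2 : ∀ τ : ℝ,
      ((φ2 + τ) * (X2 / 2) > φ2 * (1 - 1 / (2 * X2)) + (1 / 2) * s) ↔
        ((1 / X2) * s - ((X2 - 1) ^ 2 / X2 ^ 2) * φ2 < τ) := by
    intro τ
    have l1 : (1 / X2) * s - ((X2 - 1) ^ 2 / X2 ^ 2) * φ2
        = (s * X2 - (X2 - 1) ^ 2 * φ2) / X2 ^ 2 := by field_simp
    have l2 : φ2 * (1 - 1 / (2 * X2)) + (1 / 2) * s
        = (2 * φ2 * X2 - φ2 + s * X2) / (2 * X2) := by field_simp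
    have l3 : (φ2 + τ) * (X2 / 2) = ((φ2 + τ) * X2 ^ 2) / (2 * X2) := by
      field_simp
    rw [l1, l2, l3, div_lt_iff₀ (by positivity : (0:ℝ) < X2 ^ 2), gt_iff_lt,
      div_lt_div_iff₀ (by positivity) (by positivity)]
    constructor <;> intro h <;> nlinarith [h]
  have e3 : ∀ τ : ℝ, ((φ2 + τ) * X1 * X2 > φ1 - τ) ↔
      ((φ1 - X1 * X2 * φ2) / (1 + X1 * X2) < τ) := by
    intro τ
    rw [div_lt_iff₀ hden]
    constructor <;> intro h <;> nlinarith [h]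
  constructor
  · rintro ⟨τ, h1, h2, h3⟩
    exact max_lt (by have := (e2 τ).1 h2; linarith) (by have := (e3 τ).1 h3; linarith)
  · intro h
    rw [max_lt_iff] at h
    obtain ⟨hA, hB⟩ := h
    refine ⟨(max ((1 / X2) * s - ((X2 - 1) ^ 2 / X2 ^ 2) * φ2)
        ((φ1 - X1 * X2 * φ2) / (1 + X1 * X2)) + (φ1 - (1 / 2) * s)) / 2, ?_, ?_, ?_⟩
    · have := max_lt hA hB; linarith
    · refine (e2 _).2 ?_
      have h1 := le_max_left ((1 / X2) * s - ((X2 - 1) ^ 2 / X2 ^ 2) * φ2)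
        ((φ1 - X1 * X2 * φ2) / (1 + X1 * X2))
      have := max_lt hA hB; linarith
    · refine (e3 _).2 ?_
      have h1 := le_max_right ((1 / X2) * s - ((X2 - 1) ^ 2 / X2 ^ 2) * φ2)
        ((φ1 - X1 * X2 * φ2) / (1 + X1 * X2))
      have := max_lt hA hB; linarith
end

section
/- Let φ1, φ2, X1, X2 be positive reals with X1 < 1, X2 ≥ 1, φ1·X2 > φ2·X1, and φ1·X1·X2 ≥ φ2. Suppose φ2 + φ1 > 2·φ1·√(X1·X2) (so that the quadratic τ² + (φ2 − φ1)·τ + X1·X2·φ1² − φ1·φ2 has real roots z⁻ ≤ z⁺, z^∓ = ((φ1 − φ2) ∓ √((φ1 − φ2)² − 4·(X1·X2·φ1² − φ1·φ2)))/2), and suppose max{ z⁻ , (X1·X2·φ1 − φ2)/(1 + X1·X2) } < min{ z⁺ , (X2·φ1 − X1·φ2)/(X1 + X2) }. Then there exists a real number τ such that: (1/2)·√(X1·(φ1 − τ)·(φ2 + τ)/X2) > φ1·(X1/2); (φ2 + τ)·(1 − 1/(2·X2)) + (1/2)·√(X1·(φ1 − τ)·(φ2 + τ)/X2) > φ2;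 (φ1 − τ)·X2 > (φ2 + τ)·X1; and X1·X2·(φ1 − τ) < φ2 + τ. (Proposition 7: Case 1a to Case 2a transfers when X1 < 1 and X2 ≥ 1.) -/
lemma disc_nonneg_aux (a b x : ℝ) (ha : 0 < a) (hx : 0 ≤ x)
    (h : b + a > 2 * a * Real.sqrt x) :
    0 ≤ (a - b) ^ 2 - 4 * (x * a ^ 2 - a * b) := by
  have hsnn := Real.sqrt_nonneg x
  have hs := Real.sq_sqrt hx
  have h0 : 0 ≤ 2 * a * Real.sqrt x := by positivity
  have h1 : (2 * a * Real.sqrt x) ^ 2 < (b + a) ^ 2 := by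
    exact pow_lt_pow_left₀ h h0 (by norm_num)
  have h2 : (2 * a * Real.sqrt x) ^ 2 = 4 * a ^ 2 * x := by
    rw [mul_pow, mul_pow, hs]; ring
  nlinarith

set_option maxHeartbeats 1000000 in

theorem case1a_to_2a_region3 (φ1 φ2 X1 X2 : ℝ)
    (hφ1 : 0 < φ1) (hφ2 : 0 < φ2)
    (hX1pos : 0 < X1) (hX1 : X1 < 1) (hX2 : 1 ≤ X2)
    (hratio : φ1 * X2 > φ2 * X1) (hcase : φ1 * X1 * X2 ≥ φ2)
    (hdisc : φ2 + φ1 > 2 * φ1 * Real.sqrt (X1 * X2))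
    (zm zp : ℝ)
    (hzm : zm = ((φ1 - φ2) -
      Real.sqrt ((φ1 - φ2) ^ 2 - 4 * (X1 * X2 * φ1 ^ 2 - φ1 * φ2))) / 2)
    (hzp : zp = ((φ1 - φ2) +
      Real.sqrt ((φ1 - φ2) ^ 2 - 4 * (X1 * X2 * φ1 ^ 2 - φ1 * φ2))) / 2)
    (hbound : max zm ((X1 * X2 * φ1 - φ2) / (1 + X1 * X2)) <
      min zp ((X2 * φ1 - X1 * φ2) / (X1 + X2))) :
    ∃ τ : ℝ,
      (1 / 2) * Real.sqrt (X1 * (φ1 - τ) * (φ2 + τ) / X2) > φ1 * (X1 / 2) ∧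
      (φ2 + τ) * (1 - 1 / (2 * X2)) +
        (1 / 2) * Real.sqrt (X1 * (φ1 - τ) * (φ2 + τ) / X2) > φ2 ∧
      (φ1 - τ) * X2 > (φ2 + τ) * X1 ∧
      X1 * X2 * (φ1 - τ) < φ2 + τ := by
  set A := (X1 * X2 * φ1 - φ2) / (1 + X1 * X2) with hA
  set B := (X2 * φ1 - X1 * φ2) / (X1 + X2) with hB
  set τ := (max zm A + min zp B) / 2 with hτ
  have hX2pos : (0:ℝ) < X2 := lt_of_lt_of_le one_pos hX2
  have hlo : max zm A < τ := by
    have := hbound; simp only [hτ]; linarith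
  have hhi : τ < min zp B := by
    have := hbound; simp only [hτ]; linarith
  have hzmτ : zm < τ := lt_of_le_of_lt (le_max_left _ _) hlo
  have hAτ : A < τ := lt_of_le_of_lt (le_max_right _ _) hlo
  have hτzp : τ < zp := lt_of_lt_of_le hhi (min_le_left _ _)
  have hτB : τ < B := lt_of_lt_of_le hhi (min_le_right _ _)
  have hAnn : 0 ≤ A := by
    apply div_nonneg <;> nlinarith
  have hτpos : 0 < τ := lt_of_le_of_lt hAnn hAτ
  -- condition 4
  have hden1 : (0:ℝ) < 1 + X1 * X2 := by nlinarith
  have hc4 : X1 * X2 * (φ1 - τ) < φ2 + τ := by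
    have := (div_lt_iff₀ hden1).mp hAτ
    nlinarith
  -- condition 3
  have hden2 : (0:ℝ) < X1 + X2 := by linarith
  have hc3 : (φ1 - τ) * X2 > (φ2 + τ) * X1 := by
    have := (lt_div_iff₀ hden2).mp hτB
    nlinarith
  have hφ2τ : 0 < φ2 + τ := by linarith
  have hφ1τ : 0 < φ1 - τ := by nlinarith
  -- key quadratic inequality
  set D := (φ1 - φ2) ^ 2 - 4 * (X1 * X2 * φ1 ^ 2 - φ1 * φ2) with hD
  have hDnn : 0 ≤ D := disc_nonneg_aux φ1 φ2 (X1 * X2) hφ1 (le_of_lt (mul_pos hX1pos hX2pos)) hdisc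
  have hsD : Real.sqrt D ^ 2 = D := Real.sq_sqrt hDnn
  have hkey : (φ1 - τ) * (φ2 + τ) > X1 * X2 * φ1 ^ 2 := by
    have h1 : 2 * τ - (φ1 - φ2) > - Real.sqrt D := by rw [hzm] at hzmτ; linarith
    have h2 : 2 * τ - (φ1 - φ2) < Real.sqrt D := by rw [hzp] at hτzp; linarith
    nlinarith [mul_pos (by linarith : (0:ℝ) < Real.sqrt D - (2 * τ - (φ1 - φ2)))
      (by linarith : (0:ℝ) < Real.sqrt D + (2 * τ - (φ1 - φ2)))]
  -- sqrt bound
  have hsqrt : φ1 * X1 < Real.sqrt (X1 * (φ1 - τ) * (φ2 + τ) / X2) := by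
    rw [show φ1 * X1 = Real.sqrt ((φ1 * X1) ^ 2) from
      (Real.sqrt_sq (by positivity)).symm]
    apply Real.sqrt_lt_sqrt (by positivity)
    rw [lt_div_iff₀ hX2pos]
    nlinarith
  refine ⟨τ, by linarith, ?_, hc3, hc4⟩
  -- condition 2
  have hinv : 1 / (2 * X2) ≤ 1 / 2 := by
    apply div_le_div_of_nonneg_left (by norm_num) (by norm_num) (by linarith)
  have hinvpos : 0 < 1 / (2 * X2) := by positivity
  have hφ2div : φ2 * (1 / (2 * X2)) ≤ φ1 * X1 / 2 := by
    rw [mul_one_div, div_le_div_iff₀ (by linarith) (by norm_num)]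
    nlinarith
  nlinarith [mul_le_mul_of_nonneg_left hinv (le_of_lt hτpos)]
end

section
/- Let φ1, φ2, X1, X2 be positive reals with φ1·X2 > φ2·X1 and 0 < 1 − √(φ1·X1·X2/φ2) ≤ X2 (Case 2a). Then there is no τ' > 0 such that both (φ1 + τ')·(X1/2) > (1/2)·√(X1·φ1·φ2/X2) and φ2 − τ' > φ2·(1 − 1/(2·X2)) + (1/2)·√(X1·φ1·φ2/X2). (Proposition 18: from Case 2a there is no mutually beneficial valuation transfer from Player 2 to Player 1 landing in Case 1a.) -/
theorem case2a_no_reverse_transfer_to_1a (φ1 φ2 X1 X2 : ℝ)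
    (hφ1 : 0 < φ1) (hφ2 : 0 < φ2) (hX1 : 0 < X1) (hX2 : 0 < X2)
    (hratio : φ1 * X2 > φ2 * X1)
    (hlo : 0 < 1 - Real.sqrt (φ1 * X1 * X2 / φ2))
    (hhi : 1 - Real.sqrt (φ1 * X1 * X2 / φ2) ≤ X2) :
    ¬ ∃ τ' : ℝ, 0 < τ' ∧
      (φ1 + τ') * (X1 / 2) > (1 / 2) * Real.sqrt (X1 * φ1 * φ2 / X2) ∧
      φ2 - τ' > φ2 * (1 - 1 / (2 * X2)) + (1 / 2) * Real.sqrt (X1 * φ1 * φ2 / X2) := by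
  rintro ⟨τ, hτ, h1, h2⟩
  set s := Real.sqrt (φ1 * X1 * X2 / φ2) with hs
  have hsnn : 0 ≤ s := Real.sqrt_nonneg _
  have hs1 : s < 1 := by linarith
  have hsq : s ^ 2 = φ1 * X1 * X2 / φ2 := by
    rw [hs, Real.sq_sqrt]
    positivity
  have hsq' : s ^ 2 * φ2 = φ1 * X1 * X2 := by
    field_simp at hsq ⊢; linarith [hsq]
  have hsqlt : X1 ^ 2 < s ^ 2 := by
    nlinarith [hsq', mul_pos hX1 (sub_pos.2 hratio)]
  have hsX1 : X1 < s := lt_of_pow_lt_pow_left₀ 2 hsnn hsqlt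
  have hx2 : (0:ℝ) < 2 * X2 := by linarith
  have hS : Real.sqrt (X1 * φ1 * φ2 / X2) = φ2 * s / X2 := by
    have e : (φ2 * s / X2) ^ 2 = X1 * φ1 * φ2 / X2 := by
      rw [div_pow, mul_pow, hsq]
      field_simp
    rw [← e, Real.sqrt_sq (by positivity)]
  rw [hS] at h1 h2
  have e1 : (1:ℝ) / 2 * (φ2 * s / X2) = φ2 * s / (2 * X2) := by ring
  rw [e1] at h1
  have h1' : φ2 * s < (φ1 + τ) * X1 * X2 := by
    rw [gt_iff_lt, div_lt_iff₀ hx2] at h1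
    nlinarith [h1]
  have e2 : φ2 * (1 - 1 / (2 * X2)) + φ2 * s / (2 * X2)
      = φ2 - (φ2 - φ2 * s) / (2 * X2) := by
    field_simp; ring
  rw [e1, e2] at h2
  have h2' : τ * (2 * X2) < φ2 - φ2 * s := by
    have ht : τ < (φ2 - φ2 * s) / (2 * X2) := by linarith
    exact (lt_div_iff₀ hx2).mp ht
  nlinarith [h1', h2', hsq', mul_pos (sub_pos.mpr hsX1) (mul_pos hφ2 hlo),
    mul_pos hτ hX1, mul_lt_mul_of_pos_left h2' hX1]
end

section
/- Let φ1, φ2, X1 be positive reals. For every ε > 0 there exist τᵥ and τᵦ with 0 < τᵥ < ε and 0 < τᵦ < ε such that (φ1 − τᵥ)·(1 − 1/(2·(X1 + τᵦ))) > φ1·(1 − 1/(2·X1)) and φ2 + τᵥ > φ2. (The Case-1 instance of Theorem 3: arbitrarily small mutually beneficial joint transfers exist when the adversary concentrates its entire budget against Player 1 and X1 exceeds the adversary's allocation.) -/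
theorem case1_small_joint_transfer (φ1 φ2 X1 : ℝ)
    (hφ1 : 0 < φ1) (hφ2 : 0 < φ2) (hX1 : 0 < X1) :
    ∀ ε > (0 : ℝ), ∃ τv τb : ℝ,
      0 < τv ∧ τv < ε ∧ 0 < τb ∧ τb < ε ∧
      (φ1 - τv) * (1 - 1 / (2 * (X1 + τb))) > φ1 * (1 - 1 / (2 * X1)) ∧
      φ2 + τv > φ2 := by
  intro ε hε
  set τb : ℝ := ε / 2 with hτb
  have hτb0 : 0 < τb := by positivity
  have hX1b : 0 < X1 + τb := by linarith
  have hlt : 1 / (2 * (X1 + τb)) < 1 / (2 * X1) := by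
    apply one_div_lt_one_div_of_lt <;> linarith
  set δ : ℝ := φ1 * (1 / (2 * X1) - 1 / (2 * (X1 + τb))) with hδ
  have hδ0 : 0 < δ := by
    apply mul_pos hφ1; linarith
  refine ⟨min (ε / 2) (δ / 2), τb, ?_, ?_, hτb0, by linarith, ?_, ?_⟩
  · exact lt_min (by positivity) (by positivity)
  · exact lt_of_le_of_lt (min_le_left _ _) (by linarith)
  · set τv : ℝ := min (ε / 2) (δ / 2) with hτv
    have hτv0 : 0 < τv := lt_min (by positivity) (by positivity)
    have hτvδ : τv < δ := lt_of_le_of_lt (min_le_right _ _) (by linarith)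
    have hA : 1 - 1 / (2 * (X1 + τb)) ≤ 1 := by
      have : 0 < 1 / (2 * (X1 + τb)) := by positivity
      linarith
    have key : φ1 * (1 - 1 / (2 * (X1 + τb))) = φ1 * (1 - 1 / (2 * X1)) + δ := by
      rw [hδ]; ring
    nlinarith [mul_le_of_le_one_right hτv0.le hA]
  · linarith [lt_min (show (0:ℝ) < ε/2 by positivity) (show (0:ℝ) < δ/2 by positivity)]
end

section
/- Let φ1, φ2, X1, X2 be positive reals with φ1·X2 > φ2·X1 and 0 < 1 − √(φ1·X1·X2/φ2) < X2 (interior of Case 2a). Define, for (b, v) near (0, 0) with X2 − b > 0, π1(b, v) = (1/2)·√((X1 + b)·(φ1 − v)·(φ2 + v)/(X2 − b)) and π2(b, v) = (φ2 + v)·(1 − 1/(2·(X2 − b))) + π1(b, v). Assume it is not the case that both X1 + X2 = 2·√(φ2·X1/(φ1·X2)) and (2 − 4·X2)·√(φ1·φ2) = (φ1 − φ2)·√(X1·X2) (i.e., the gradient of π2 at (0,0) is nonzero), and assume φ1·(1 − 2·X2)·(X1 + X2) ≠ X1·(φ1 − φ2) (the gradients of π1 and π2 at (0,0) are not diametrically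 opposed). Then for every ε > 0 there exists a pair (b, v) with |b| < ε, |v| < ε, and X2 − b > 0 such that π1(b, v) > π1(0, 0) and π2(b, v) > π2(0, 0). (Proposition 20: existence of mutually beneficial joint transfers in the interior of Case 2.) -/
/-!
Write `π2 = h + π1` with `h b v = (φ2 + v) * (1 - 1 / (2 * (X2 - b)))` and move along a ray
`t ↦ (t * u, t * w)`. Taking `(u, w)` perpendicular to the gradient of `h` at the origin makes the
derivative of `h` along the ray vanish; scaling it by the derivative `D` of `π1` in that direction
makes the derivative of `π1`, hence of `π2`, equal to `D ^ 2`. Up to a positive factor, `D` is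
`φ1 * (2 * X2 - 1) * (X1 + X2) + X1 * (φ1 - φ2)`, which is nonzero by assumption, so both payoffs
strictly increase for small `t > 0`.
-/

open Filter Topology

theorem HasDerivAt.eventually_nhdsGT_lt_of_pos {f : ℝ → ℝ} {f' x : ℝ} (hf : HasDerivAt f f' x)
    (hf' : 0 < f') : ∀ᶠ t in 𝓝[>] x, f x < f t := by
  have hslope : ∀ᶠ t in 𝓝[>] x, 0 < slope f x t :=
    (hf.tendsto_slope.mono_left (nhdsGT_le_nhdsNE x)).eventually (eventually_gt_nhds hf')
  filter_upwards [hslope, self_mem_nhdsWithin] with t ht (hxt : x < t)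
  rw [slope_def_field] at ht
  exact sub_pos.mp ((div_pos_iff_of_pos_right (sub_pos.mpr hxt)).mp ht)

theorem eventually_abs_mul_lt (u : ℝ) {ε : ℝ} (hε : 0 < ε) : ∀ᶠ t in 𝓝 (0 : ℝ), |t * u| < ε :=
  (continuous_id.mul continuous_const).abs.tendsto' 0 0 (by simp) |>.eventually (gt_mem_nhds hε)

theorem hasDerivAt_const_add_mul (c d : ℝ) : HasDerivAt (fun t : ℝ => c + t * d) d 0 := by
  simpa using ((hasDerivAt_id (0 : ℝ)).mul_const d).const_add c

theorem hasDerivAt_const_sub_mul (c d : ℝ) : HasDerivAt (fun t : ℝ => c - t * d) (-d) 0 := by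
  simpa using ((hasDerivAt_id (0 : ℝ)).mul_const d).const_sub c

section Case2

variable {X1 X2 φ1 φ2 : ℝ}

theorem hasDerivAt_payoff_along (hX1 : 0 < X1) (hX2 : 0 < X2) (hφ1 : 0 < φ1) (hφ2 : 0 < φ2)
    (u w : ℝ) :
    HasDerivAt (fun t => (1 / 2) * √((X1 + t * u) * (φ1 - t * w) * (φ2 + t * w) / (X2 - t * u)))
      (√(X1 * φ1 * φ2 / X2) / 4 * (u * (X1 + X2) / (X1 * X2) + w * (φ1 - φ2) / (φ1 * φ2))) 0 := by
  set R := X1 * φ1 * φ2 / X2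
  have hR : 0 < R := by positivity
  have hR0 : (X1 + 0 * u) * (φ1 - 0 * w) * (φ2 + 0 * w) / (X2 - 0 * u) = R := by simp [R]
  have hquot : HasDerivAt (fun t => (X1 + t * u) * (φ1 - t * w) * (φ2 + t * w) / (X2 - t * u))
      (R * (u * (X1 + X2) / (X1 * X2) + w * (φ1 - φ2) / (φ1 * φ2))) 0 := by
    refine ((((hasDerivAt_const_add_mul X1 u).mul (hasDerivAt_const_sub_mul φ1 w)).mul
      (hasDerivAt_const_add_mul φ2 w)).div (hasDerivAt_const_sub_mul X2 u)
      (by simpa using hX2.ne')).congr_deriv ?_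
    simp only [R, Pi.mul_apply, zero_mul, add_zero, sub_zero]
    field_simp
    ring
  refine ((hquot.sqrt (hR0 ▸ hR.ne')).const_mul (1 / 2 : ℝ)).congr_deriv ?_
  rw [hR0]
  have hsR : 0 < √R := Real.sqrt_pos.mpr hR
  field_simp
  rw [Real.sq_sqrt hR.le]
  ring

theorem hasDerivAt_transfer_along (hX2 : X2 ≠ 0) (u w : ℝ) :
    HasDerivAt (fun t => (φ2 + t * w) * (1 - 1 / (2 * (X2 - t * u))))
      (w * (1 - 1 / (2 * X2)) - u * (φ2 / (2 * X2 ^ 2))) 0 := by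
  have h := (hasDerivAt_const_add_mul φ2 w).mul
    ((((hasDerivAt_const_sub_mul X2 u).const_mul 2).inv (by simpa using hX2)).const_sub 1)
  simp only [one_div]
  refine h.congr_deriv ?_
  simp only [Pi.inv_apply, zero_mul, add_zero, sub_zero]
  field_simp
  ring

theorem exists_direction_payoff_deriv_pos_transfer_deriv_zero
    (hX1 : 0 < X1) (hX2 : 0 < X2) (hφ1 : 0 < φ1) (hφ2 : 0 < φ2)
    (hopp : φ1 * (1 - 2 * X2) * (X1 + X2) ≠ X1 * (φ1 - φ2)) :
    ∃ u w c : ℝ, 0 < c ∧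
      HasDerivAt (fun t => (1 / 2) * √((X1 + t * u) * (φ1 - t * w) * (φ2 + t * w) / (X2 - t * u)))
        c 0 ∧
      HasDerivAt (fun t => (φ2 + t * w) * (1 - 1 / (2 * (X2 - t * u)))) 0 0 := by
  -- `(a, β)` is the gradient of the transfer term at the origin, rotated by a right angle.
  set a := 1 - 1 / (2 * X2)
  set β := φ2 / (2 * X2 ^ 2)
  set D := √(X1 * φ1 * φ2 / X2) / 4 * (a * (X1 + X2) / (X1 * X2) + β * (φ1 - φ2) / (φ1 * φ2))
    with hD_def
  have hD : D ≠ 0 := by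
    have hD_eq : D = √(X1 * φ1 * φ2 / X2) / (8 * X1 * X2 ^ 2 * φ1) *
        (φ1 * (2 * X2 - 1) * (X1 + X2) + X1 * (φ1 - φ2)) := by
      simp only [D, a, β]
      field_simp
      ring
    rw [hD_eq]
    refine mul_ne_zero (by positivity) fun h => hopp ?_
    linear_combination -h
  refine ⟨D * a, D * β, D ^ 2, by positivity, ?_, ?_⟩
  · refine (hasDerivAt_payoff_along hX1 hX2 hφ1 hφ2 _ _).congr_deriv ?_
    linear_combination D * hD_def
  · exact (hasDerivAt_transfer_along hX2.ne' _ _).congr_deriv (by ring)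

end Case2

theorem case2_joint_transfer_general (φ1 φ2 X1 X2 : ℝ)
    (hφ1 : 0 < φ1) (hφ2 : 0 < φ2) (hX1 : 0 < X1) (hX2 : 0 < X2)
    (π1 π2 : ℝ → ℝ → ℝ)
    (hπ1 : ∀ b v, π1 b v =
      (1 / 2) * Real.sqrt ((X1 + b) * (φ1 - v) * (φ2 + v) / (X2 - b)))
    (hπ2 : ∀ b v, π2 b v =
      (φ2 + v) * (1 - 1 / (2 * (X2 - b))) + π1 b v)
    (hopp : φ1 * (1 - 2 * X2) * (X1 + X2) ≠ X1 * (φ1 - φ2)) :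
    ∀ ε > (0 : ℝ), ∃ b v : ℝ,
      |b| < ε ∧ |v| < ε ∧ X2 - b > 0 ∧
      π1 b v > π1 0 0 ∧ π2 b v > π2 0 0 := by
  intro ε hε
  obtain ⟨u, w, c, hc, hpayoff, htransfer⟩ :=
    exists_direction_payoff_deriv_pos_transfer_deriv_zero hX1 hX2 hφ1 hφ2 hopp
  have hπ1_along : HasDerivAt (fun t => π1 (t * u) (t * w)) c 0 :=
    hpayoff.congr_of_eventuallyEq (Eventually.of_forall fun _ => hπ1 _ _)
  have hπ2_along : HasDerivAt (fun t => π2 (t * u) (t * w)) c 0 :=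
    ((htransfer.add hπ1_along).congr_of_eventuallyEq
      (Eventually.of_forall fun _ => hπ2 _ _)).congr_deriv (zero_add c)
  obtain ⟨t, hgain1, hgain2, hb, hv, hbX2⟩ :=
    ((hπ1_along.eventually_nhdsGT_lt_of_pos hc).and ((hπ2_along.eventually_nhdsGT_lt_of_pos hc).and
      (((eventually_abs_mul_lt u hε).and ((eventually_abs_mul_lt w hε).and
        (eventually_abs_mul_lt u hX2))).filter_mono nhdsWithin_le_nhds))).exists
  refine ⟨t * u, t * w, hb, hv, sub_pos.mpr (lt_of_abs_lt hbX2), ?_, ?_⟩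
  · simpa only [zero_mul] using hgain1
  · simpa only [zero_mul] using hgain2

theorem case2_joint_transfer (φ1 φ2 X1 X2 : ℝ)
    (hφ1 : 0 < φ1) (hφ2 : 0 < φ2) (hX1 : 0 < X1) (hX2 : 0 < X2)
    (hratio : φ1 * X2 > φ2 * X1)
    (hlo : 0 < 1 - Real.sqrt (φ1 * X1 * X2 / φ2))
    (hhi : 1 - Real.sqrt (φ1 * X1 * X2 / φ2) < X2)
    (π1 π2 : ℝ → ℝ → ℝ)
    (hπ1 : ∀ b v, π1 b v =
      (1 / 2) * Real.sqrt ((X1 + b) * (φ1 - v) * (φ2 + v) / (X2 - b)))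
    (hπ2 : ∀ b v, π2 b v =
      (φ2 + v) * (1 - 1 / (2 * (X2 - b))) + π1 b v)
    (hgrad : ¬ (X1 + X2 = 2 * Real.sqrt (φ2 * X1 / (φ1 * X2)) ∧
      (2 - 4 * X2) * Real.sqrt (φ1 * φ2) = (φ1 - φ2) * Real.sqrt (X1 * X2)))
    (hopp : φ1 * (1 - 2 * X2) * (X1 + X2) ≠ X1 * (φ1 - φ2)) :
    ∀ ε > (0 : ℝ), ∃ b v : ℝ,
      |b| < ε ∧ |v| < ε ∧ X2 - b > 0 ∧
      π1 b v > π1 0 0 ∧ π2 b v > π2 0 0 :=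
  case2_joint_transfer_general φ1 φ2 X1 X2 hφ1 hφ2 hX1 hX2 π1 π2 hπ1 hπ2 hopp
end
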